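/- arXiv:1901.06005 — 7 statements merged into one kernel-verified Lean document; each statement's English description precedes it below -/
import Mathlib

section
/- Let p, m ≥ 1 be integers and let Q ∈ ℝ^{p×m} be a matrix with rank Q = p. Then there exist a matrix Q⁰ ∈ ℝ^{p×m} in canonical form and a lower unitriangular matrix L ∈ ℝ^{m×m} such that QL = Q⁰. -/
/-- A matrix `L` is lower unitriangular if `L i j = 0` whenever `i < j`
and `L i i = 1` for every `i`. -/
def IsLowerUnitriangular {m : ℕ} (L : Matrix (Fin m) (Fin m) ℝ) : Prop :=
  (∀ i j : Fin m, i < j → L i j = 0) ∧ ∀ i : Fin m, L i i = 1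

/-- `Q` is in canonical form with witnessing (distinct) column indices `c 1, …, c p`:
for every row `i`, the entry `Q i (c i)` is nonzero, the entries `Q i j` vanish
for `j > c i` with `j ∉ {c (i+1), …, c p}`, and the entries `Q i j` vanish
for `j < c i`. -/
def IsCanonicalFormWith {p m : ℕ} (Q : Matrix (Fin p) (Fin m) ℝ) (c : Fin p → Fin m) : Prop :=
  Function.Injective c ∧
    ∀ i : Fin p,
      Q i (c i) ≠ 0 ∧
      (∀ j : Fin m, c i < j → (∀ k : Fin p, i < k → j ≠ c k) → Q i j = 0) ∧
      (∀ j : Fin m, j < c i → Q i j = 0)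

/-- `Q` is in canonical form. -/
def IsCanonicalForm {p m : ℕ} (Q : Matrix (Fin p) (Fin m) ℝ) : Prop :=
  ∃ c : Fin p → Fin m, IsCanonicalFormWith Q c

/-! Since `Q` has full row rank, we may work row by row from the bottom. If the rows below the
first are already in canonical form after a lower unitriangular column transformation, the first
row must have a nonzero entry outside their pivot columns, for otherwise all `p` rows would live
in a coordinate space of dimension `p - 1`. The last such column `c₀` becomes the new pivot: the
other rows vanish in column `c₀`, so adding multiples of column `c₀` to the columns left of it
clears the first row there without disturbing the others, and this column operation is again
lower unitriangular. -/

open Matrix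

theorem LinearIndependent.card_le_of_eq_zero_off_range {K ι κ n : Type*} [Ring K]
    [StrongRankCondition K] [Fintype ι] [Fintype κ] {v : ι → n → K}
    (hv : LinearIndependent K v) (c : κ → n) (hvc : ∀ i j, j ∉ Set.range c → v i j = 0) :
    Fintype.card ι ≤ Fintype.card κ := by
  have hextend : Function.ExtendByZero.linearMap K c ∘ (fun i => v i ∘ c) = v := by
    funext i j
    by_cases hj : ∃ k, c k = j
    · classical
      rw [Function.comp_apply, Function.ExtendByZero.linearMap_apply, Function.extend_def,
        dif_pos hj]
      exact congrArg (v i) hj.choose_spec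
    · simp [hj, hvc i j hj]
  have hrestrict : LinearIndependent K fun i => v i ∘ c :=
    LinearIndependent.of_comp _ (hextend ▸ hv)
  simpa using hrestrict.fintype_card_le_finrank

namespace IsLowerUnitriangular

variable {m : ℕ} {A B : Matrix (Fin m) (Fin m) ℝ}

theorem one : IsLowerUnitriangular (1 : Matrix (Fin m) (Fin m) ℝ) :=
  ⟨fun _ _ hij => one_apply_ne hij.ne, one_apply_eq⟩

theorem mul (hA : IsLowerUnitriangular A) (hB : IsLowerUnitriangular B) :
    IsLowerUnitriangular (A * B) := by
  refine ⟨fun i j hij => ?_, fun i => ?_⟩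
  · rw [mul_apply]
    refine Finset.sum_eq_zero fun k _ => ?_
    rcases lt_or_ge k j with hkj | hjk
    · rw [hB.1 k j hkj, mul_zero]
    · rw [hA.1 i k (hij.trans_le hjk), zero_mul]
  · rw [mul_apply, Finset.sum_eq_single i, hA.2, hB.2, one_mul]
    · intro k _ hki
      rcases hki.lt_or_gt with hki | hik
      · rw [hB.1 k i hki, mul_zero]
      · rw [hA.1 i k hik, zero_mul]
    · simp

theorem isUnit (hA : IsLowerUnitriangular A) : IsUnit A := by
  rw [isUnit_iff_isUnit_det, det_of_isLowerTriangular A fun i j hij => hA.1 i j hij]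
  simp [hA.2]

end IsLowerUnitriangular

theorem LinearIndependent.row_mul_of_isUnit {K m n : Type*} [Field K] [Fintype n]
    [DecidableEq n] {A : Matrix m n K} {L : Matrix n n K} (hA : LinearIndependent K A.row)
    (hL : IsUnit L) : LinearIndependent K (A * L).row :=
  hA.map' L.vecMulLinear (LinearMap.ker_eq_bot.mpr (vecMul_injective_iff_isUnit.mpr hL))

theorem mul_one_add_vecMulVec_single_apply {R m n : Type*} [CommSemiring R] [Fintype n]
    [DecidableEq n] (A : Matrix m n R) (c : n) (w : n → R) (i : m) (j : n) :
    (A * (1 + vecMulVec (Pi.single c 1) w : Matrix n n R)) i j = A i j + A i c * w j := by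
  rw [Matrix.mul_add, Matrix.mul_one, mul_vecMulVec, mulVec_single_one]
  rfl

theorem isLowerUnitriangular_one_add_vecMulVec_single {m : ℕ} {c : Fin m} {w : Fin m → ℝ}
    (hw : ∀ j, c ≤ j → w j = 0) :
    IsLowerUnitriangular (1 + vecMulVec (Pi.single c 1) w) := by
  have hE : ∀ i j, i ≤ j → vecMulVec (Pi.single c 1) w i j = 0 := by
    intro i j hij
    rcases eq_or_ne i c with rfl | hic
    · simp [vecMulVec_apply, hw j hij]
    · simp [vecMulVec_apply, hic]
  exact ⟨fun i j hij => by simp [one_apply_ne hij.ne, hE i j hij.le],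
    fun i => by simp [hE i i le_rfl]⟩

namespace IsCanonicalFormWith

variable {p m : ℕ}

theorem apply_eq_zero_of_notMem_range {Q : Matrix (Fin p) (Fin m) ℝ} {c : Fin p → Fin m}
    (h : IsCanonicalFormWith Q c) (i : Fin p) {j : Fin m} (hj : j ∉ Set.range c) :
    Q i j = 0 := by
  rcases lt_trichotomy j (c i) with hlt | rfl | hgt
  · exact (h.2 i).2.2 j hlt
  · exact absurd ⟨i, rfl⟩ hj
  · exact (h.2 i).2.1 j hgt fun k _ hk => hj ⟨k, hk.symm⟩

theorem cons {Q : Matrix (Fin (p + 1)) (Fin m) ℝ} {c : Fin p → Fin m} {c₀ : Fin m}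
    (htail : IsCanonicalFormWith (Q.submatrix Fin.succ id) c) (hc₀ : c₀ ∉ Set.range c)
    (hpivot : Q 0 c₀ ≠ 0) (hright : ∀ j, c₀ < j → j ∉ Set.range c → Q 0 j = 0)
    (hleft : ∀ j, j < c₀ → Q 0 j = 0) :
    IsCanonicalFormWith Q (Fin.cons c₀ c) := by
  refine ⟨Fin.cons_injective_iff.mpr ⟨hc₀, htail.1⟩, Fin.cases ?_ fun k => ?_⟩
  · refine ⟨hpivot, fun j hj hnot => hright j hj ?_, hleft⟩
    rintro ⟨l, rfl⟩
    simpa using hnot l.succ l.succ_pos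
  · obtain ⟨hpivot', hright', hleft'⟩ := htail.2 k
    refine ⟨hpivot', fun j hj hnot => hright' j hj fun l hkl => ?_, hleft'⟩
    simpa using hnot l.succ (Fin.succ_lt_succ_iff.mpr hkl)

theorem exists_mul_cons {Q : Matrix (Fin (p + 1)) (Fin m) ℝ} {c : Fin p → Fin m}
    (hQ : LinearIndependent ℝ Q.row) (htail : IsCanonicalFormWith (Q.submatrix Fin.succ id) c) :
    ∃ (c₀ : Fin m) (E : Matrix (Fin m) (Fin m) ℝ),
      IsLowerUnitriangular E ∧ IsCanonicalFormWith (Q * E) (Fin.cons c₀ c) := by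
  have htail_zero : ∀ k : Fin p, ∀ j ∉ Set.range c, Q k.succ j = 0 := fun k _ hj =>
    htail.apply_eq_zero_of_notMem_range k hj
  classical
  set S := Finset.univ.filter fun j => Q 0 j ≠ 0 ∧ j ∉ Set.range c
  have hS : S.Nonempty := by
    by_contra hS
    have hzero : ∀ i, ∀ j ∉ Set.range c, Q i j = 0 := by
      refine Fin.cases (fun j hj => ?_) htail_zero
      by_contra hQj
      exact hS ⟨j, Finset.mem_filter.mpr ⟨Finset.mem_univ j, hQj, hj⟩⟩
    simpa using hQ.card_le_of_eq_zero_off_range c hzero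
  obtain ⟨c₀, hc₀S, hc₀max⟩ := S.exists_max_image id hS
  obtain ⟨-, hpivot, hc₀⟩ := Finset.mem_filter.mp hc₀S
  set w : Fin m → ℝ := fun j => if j < c₀ then -(Q 0 j / Q 0 c₀) else 0
  have hw : ∀ j, c₀ ≤ j → w j = 0 := fun j hj => if_neg hj.not_gt
  refine ⟨c₀, 1 + vecMulVec (Pi.single c₀ 1) w,
    isLowerUnitriangular_one_add_vecMulVec_single hw, cons ?_ hc₀ ?_ ?_ ?_⟩
  · convert htail using 1
    ext k j
    simp [mul_one_add_vecMulVec_single_apply, htail_zero k c₀ hc₀]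
  · simpa [mul_one_add_vecMulVec_single_apply, hw c₀ le_rfl] using hpivot
  · intro j hj hjc
    rw [mul_one_add_vecMulVec_single_apply, hw j hj.le, mul_zero, add_zero]
    by_contra hQj
    exact (hc₀max j (Finset.mem_filter.mpr ⟨Finset.mem_univ j, hQj, hjc⟩)).not_gt hj
  · intro j hj
    simp [mul_one_add_vecMulVec_single_apply, w, hj, mul_div_cancel₀ _ hpivot]

end IsCanonicalFormWith

theorem exists_isLowerUnitriangular_isCanonicalFormWith_mul {m : ℕ} :
    ∀ {p : ℕ} (Q : Matrix (Fin p) (Fin m) ℝ), LinearIndependent ℝ Q.row →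
      ∃ (c : Fin p → Fin m) (L : Matrix (Fin m) (Fin m) ℝ),
        IsLowerUnitriangular L ∧ IsCanonicalFormWith (Q * L) c
  | 0, _, _ => ⟨Fin.elim0, 1, .one, fun i => i.elim0, fun i => i.elim0⟩
  | p + 1, Q, hQ => by
    obtain ⟨c, L, hL, htail⟩ := exists_isLowerUnitriangular_isCanonicalFormWith_mul
      (Q.submatrix Fin.succ id) (hQ.comp Fin.succ (Fin.succ_injective p))
    obtain ⟨c₀, E, hE, hcan⟩ :=
      IsCanonicalFormWith.exists_mul_cons (hQ.row_mul_of_isUnit hL.isUnit) htail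
    exact ⟨Fin.cons c₀ c, L * E, hL.mul hE, by rwa [← Matrix.mul_assoc]⟩

theorem canonical_UL_decomposition_exists_general {p m : ℕ}
    (Q : Matrix (Fin p) (Fin m) ℝ) (hQ : Q.rank = p) :
    ∃ (Q0 : Matrix (Fin p) (Fin m) ℝ) (L : Matrix (Fin m) (Fin m) ℝ),
      IsCanonicalForm Q0 ∧ IsLowerUnitriangular L ∧ Q * L = Q0 := by
  have hrows : LinearIndependent ℝ Q.row := by
    rw [linearIndependent_iff_card_eq_finrank_span, Fintype.card_fin]
    exact hQ.symm.trans (rank_eq_finrank_span_row Q)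
  obtain ⟨c, L, hL, hcan⟩ := exists_isLowerUnitriangular_isCanonicalFormWith_mul Q hrows
  exact ⟨Q * L, L, ⟨c, hcan⟩, hL, rfl⟩

/-- Existence part of the canonical UL-decomposition: every full row rank matrix
`Q ∈ ℝ^{p×m}` can be written as `Q * L = Q⁰` with `L` lower unitriangular and
`Q⁰` in canonical form. -/
theorem canonical_UL_decomposition_exists {p m : ℕ} (hp : 1 ≤ p) (hm : 1 ≤ m)
    (Q : Matrix (Fin p) (Fin m) ℝ) (hQ : Q.rank = p) :
    ∃ (Q0 : Matrix (Fin p) (Fin m) ℝ) (L : Matrix (Fin m) (Fin m) ℝ),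
      IsCanonicalForm Q0 ∧ IsLowerUnitriangular L ∧ Q * L = Q0 :=
  canonical_UL_decomposition_exists_general Q hQ
end

section
/- Let p, m ≥ 1, let Q ∈ ℝ^{p×m} with rank Q = p, let L ∈ ℝ^{m×m} be lower unitriangular with Q⁰ := QL in canonical form with witnessing indices c_1,…,c_p, and let Λ₊ = diag(λ_1,…,λ_p) ∈ ℝ^{p×p} with λ_i < 0 for all i, Λ₋ ∈ ℝ^{m×m} diagonal with strictly positive diagonal entries. Set C₀ = -Λ₋^{-1} Qᵀ Λ₊ Σ and, for k ∈ {1,…,p}, ℓ(k) := min(c_p, c_{p-1}, …, c_{p-k+1}). Then for every k ∈ {1,…,p} and every ℓ ∈ {0,…,ℓ(k)-1}: ker(E⁻_ℓ C₀ E⁺_k) = { w ∈ ℝ^p : w_i = 0 for every i ∈ {1,…,k} }. -/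
/-- The antidiagonal permutation matrix `Σ ∈ ℝ^{p×p}`: the (1-indexed) entry `(i,j)`
equals `1` if `i + j = p + 1` and `0` otherwise. -/
def SigmaMat (p : ℕ) : Matrix (Fin p) (Fin p) ℝ :=
  Matrix.of fun i j => if (i : ℕ) + (j : ℕ) + 1 = p then 1 else 0

/-- `E⁻_ℓ ∈ ℝ^{m×m}`: diagonal matrix whose first `ℓ` diagonal entries are `0`,
the rest being `1`. -/
def Eminus (m : ℕ) (l : ℕ) : Matrix (Fin m) (Fin m) ℝ :=
  Matrix.diagonal fun i => if (i : ℕ) < l then 0 else 1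

/-- `E⁺_k ∈ ℝ^{p×p}`: diagonal matrix whose first `k` diagonal entries are `1`,
the rest being `0`. -/
def Eplus (p : ℕ) (k : ℕ) : Matrix (Fin p) (Fin p) ℝ :=
  Matrix.diagonal fun i => if (i : ℕ) < k then 1 else 0

/-- `C₀ = -Λ₋⁻¹ Qᵀ Λ₊ Σ`, where `Λ₊ = diag lam` and `Λ₋ = diag mu`. -/
noncomputable def C0mat {p m : ℕ} (Q : Matrix (Fin p) (Fin m) ℝ)
    (lam : Fin p → ℝ) (mu : Fin m → ℝ) : Matrix (Fin m) (Fin p) ℝ :=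
  -((Matrix.diagonal fun j => (mu j)⁻¹) * Q.transpose * Matrix.diagonal lam * SigmaMat p)

/-- `ℓ(k) = min (c_p, …, c_{p-k+1})` where the `c_r` are taken as 1-indexed column
values: the minimum of `(c r) + 1` over the (0-indexed) rows `r` with `p - k ≤ r`. -/
noncomputable def ellOf {p m : ℕ} (c : Fin p → Fin m) (k : ℕ) : ℕ :=
  sInf {n : ℕ | ∃ r : Fin p, p - k ≤ (r : ℕ) ∧ (c r : ℕ) + 1 = n}


/-!
Write `u := E⁺_k w` and `a := Λ₊ Σ u`, so that row `j` of `E⁻_ℓ C₀ E⁺_k w = 0` says, for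
`j ≥ ℓ`, that column `j` of `aᵀ Q` vanishes. Since `L` is lower triangular, the columns
`j ≥ ℓ` of `aᵀ Q L = aᵀ Q⁰` vanish as well. The support of `a` consists of the rows
`r ≥ p - k`, whose pivots satisfy `c_r ≥ ℓ(k) > ℓ`; testing `aᵀ Q⁰` at the smallest pivot
of the support isolates a single nonzero term, so `a = 0`, hence `u = 0`.
-/

open Matrix

lemma IsCanonicalFormWith.eq_zero_of_vecMul_eq_zero {p m : ℕ} {Q : Matrix (Fin p) (Fin m) ℝ}
    {c : Fin p → Fin m} (hc : IsCanonicalFormWith Q c) {S : Set (Fin m)} {a : Fin p → ℝ}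
    (ha : ∀ r, a r ≠ 0 → c r ∈ S) (h : ∀ j ∈ S, (a ᵥ* Q) j = 0) : a = 0 := by
  by_contra hne
  obtain ⟨r, hr, hmin⟩ := (Finset.univ.filter (a · ≠ 0)).exists_min_image c <| by
    obtain ⟨r, hr⟩ := Function.ne_iff.mp hne
    exact ⟨r, by simpa using hr⟩
  simp only [Finset.mem_filter, Finset.mem_univ, true_and] at hr hmin
  have hpivot : (a ᵥ* Q) (c r) = a r * Q r (c r) := by
    refine Finset.sum_eq_single r (fun s _ hs => show a s * Q s (c r) = 0 from ?_)
      fun hr => absurd (Finset.mem_univ r) hr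
    by_cases has : a s = 0
    · rw [has, zero_mul]
    · have hlt : c r < c s := lt_of_le_of_ne (hmin s has) fun h => hs (hc.1 h).symm
      rw [(hc.2 s).2.2 _ hlt, mul_zero]
  exact mul_ne_zero hr (hc.2 r).1 (hpivot ▸ h _ (ha r hr))

lemma vecMul_apply_eq_zero_of_lowerTriangular {n R : Type*} [Fintype n] [LinearOrder n]
    [NonUnitalNonAssocSemiring R] {L : Matrix n n R} (hL : ∀ i j, i < j → L i j = 0)
    {S : Set n} (hS : IsUpperSet S) {v : n → R} (hv : ∀ j ∈ S, v j = 0) :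
    ∀ j ∈ S, (v ᵥ* L) j = 0 := by
  intro j hj
  refine Finset.sum_eq_zero fun t _ => show v t * L t j = 0 from ?_
  rcases lt_or_ge t j with htj | hjt
  · rw [hL t j htj, mul_zero]
  · rw [hv t (hS hjt hj), zero_mul]

lemma SigmaMat_mulVec {p : ℕ} (u : Fin p → ℝ) : SigmaMat p *ᵥ u = u ∘ Fin.rev := by
  funext s
  refine (Finset.sum_eq_single s.rev (fun t _ hts => ?_)
    fun hs => absurd (Finset.mem_univ _) hs).trans ?_
  · have : (s : ℕ) + t + 1 ≠ p := fun h => hts (Fin.ext (by simp; omega))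
    simp [SigmaMat, this]
  · simp [SigmaMat, Fin.val_rev]
    omega

lemma C0mat_mulVec {p m : ℕ} (Q : Matrix (Fin p) (Fin m) ℝ) (lam : Fin p → ℝ)
    (mu : Fin m → ℝ) (u : Fin p → ℝ) (j : Fin m) :
    (C0mat Q lam mu *ᵥ u) j = -((mu j)⁻¹ * ((fun s => lam s * u s.rev) ᵥ* Q) j) := by
  have hdiag : diagonal lam *ᵥ (u ∘ Fin.rev) = fun s => lam s * u s.rev :=
    funext fun s => mulVec_diagonal _ _ s
  rw [C0mat, neg_mulVec, Pi.neg_apply, ← mulVec_mulVec, ← mulVec_mulVec, ← mulVec_mulVec,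
    SigmaMat_mulVec, hdiag, mulVec_transpose, mulVec_diagonal]

lemma Eminus_mulVec_apply {m : ℕ} (l : ℕ) (v : Fin m → ℝ) (j : Fin m) :
    (Eminus m l *ᵥ v) j = if (j : ℕ) < l then 0 else v j := by
  rw [Eminus, mulVec_diagonal]
  split_ifs <;> simp

lemma Eplus_mulVec_eq_zero_iff {p : ℕ} (k : ℕ) (w : Fin p → ℝ) :
    Eplus p k *ᵥ w = 0 ↔ ∀ i : Fin p, (i : ℕ) < k → w i = 0 := by
  simp only [funext_iff, Eplus, mulVec_diagonal, Pi.zero_apply, ite_mul, one_mul, zero_mul,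
    ite_eq_right_iff]

lemma le_of_lt_ellOf {p m : ℕ} {c : Fin p → Fin m} {k l : ℕ} (hl : l < ellOf c k)
    {i : Fin p} (hi : (i : ℕ) < k) : l ≤ c i.rev := by
  have hmem : (c i.rev : ℕ) + 1 ∈ {n : ℕ | ∃ r : Fin p, p - k ≤ (r : ℕ) ∧ (c r : ℕ) + 1 = n} :=
    ⟨i.rev, by rw [Fin.val_rev]; omega, rfl⟩
  have := Nat.sInf_le hmem
  rw [ellOf] at hl
  omega

lemma eq_zero_of_Eminus_mul_C0mat_mulVec_eq_zero {p m : ℕ} {Q : Matrix (Fin p) (Fin m) ℝ}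
    {L : Matrix (Fin m) (Fin m) ℝ} (hL : ∀ i j, i < j → L i j = 0) {c : Fin p → Fin m}
    (hc : IsCanonicalFormWith (Q * L) c) {lam : Fin p → ℝ} (hlam : ∀ i, lam i ≠ 0)
    {mu : Fin m → ℝ} (hmu : ∀ j, mu j ≠ 0) {l : ℕ} {u : Fin p → ℝ}
    (hu : ∀ i, u i ≠ 0 → l ≤ c i.rev) (h : (Eminus m l * C0mat Q lam mu) *ᵥ u = 0) :
    u = 0 := by
  set a : Fin p → ℝ := fun s => lam s * u s.rev
  let S : Set (Fin m) := {j | l ≤ (j : ℕ)}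
  have hS : IsUpperSet S := fun _ _ hij hi => le_trans hi (Fin.le_def.mp hij)
  have haQ : ∀ j ∈ S, (a ᵥ* Q) j = 0 := by
    intro j hj
    have hj' := congrFun h j
    rw [← mulVec_mulVec, Eminus_mulVec_apply, if_neg (not_lt.mpr hj), C0mat_mulVec,
      Pi.zero_apply, neg_eq_zero] at hj'
    exact (mul_eq_zero.mp hj').resolve_left (inv_ne_zero (hmu j))
  have haQL : ∀ j ∈ S, (a ᵥ* (Q * L)) j = 0 := by
    rw [← vecMul_vecMul]
    exact vecMul_apply_eq_zero_of_lowerTriangular hL hS haQ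
  have ha : a = 0 := hc.eq_zero_of_vecMul_eq_zero (fun r hr => by
    simpa [S] using hu r.rev (right_ne_zero_of_mul hr)) haQL
  funext i
  simpa [a, hlam] using congrFun ha i.rev

theorem kernel_eq_first_k_zero_general {p m : ℕ}
    (Q : Matrix (Fin p) (Fin m) ℝ)
    (L : Matrix (Fin m) (Fin m) ℝ) (hL : IsLowerUnitriangular L)
    (c : Fin p → Fin m) (hc : IsCanonicalFormWith (Q * L) c)
    (lam : Fin p → ℝ) (hlam : ∀ i, lam i < 0)
    (mu : Fin m → ℝ) (hmu : ∀ j, 0 < mu j)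
    (k : ℕ) :
    ∀ l : ℕ, l < ellOf c k →
      {w : Fin p → ℝ | (Eminus m l * C0mat Q lam mu * Eplus p k).mulVec w = 0} =
        {w : Fin p → ℝ | ∀ i : Fin p, (i : ℕ) < k → w i = 0} := by
  intro l hl
  ext w
  rw [Set.mem_ofPred_eq, Set.mem_ofPred_eq, ← mulVec_mulVec, ← Eplus_mulVec_eq_zero_iff]
  refine ⟨fun h => ?_, fun h => by rw [h, mulVec_zero]⟩
  refine eq_zero_of_Eminus_mul_C0mat_mulVec_eq_zero hL.1 hc (fun i => (hlam i).ne)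
    (fun j => (hmu j).ne') (fun i hi => le_of_lt_ellOf hl ?_) h
  by_contra hik
  simp [Eplus, mulVec_diagonal, hik] at hi

/-- For `ℓ ∈ {0,…,ℓ(k)-1}`, the kernel `ker (E⁻_ℓ C₀ E⁺_k)` is exactly the set of
vectors `w ∈ ℝ^p` whose first `k` components vanish. -/
theorem kernel_eq_first_k_zero {p m : ℕ} (hp : 1 ≤ p) (hm : 1 ≤ m)
    (Q : Matrix (Fin p) (Fin m) ℝ) (hQ : Q.rank = p)
    (L : Matrix (Fin m) (Fin m) ℝ) (hL : IsLowerUnitriangular L)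
    (c : Fin p → Fin m) (hc : IsCanonicalFormWith (Q * L) c)
    (lam : Fin p → ℝ) (hlam : ∀ i, lam i < 0)
    (mu : Fin m → ℝ) (hmu : ∀ j, 0 < mu j)
    (k : ℕ) (hk1 : 1 ≤ k) (hk2 : k ≤ p) :
    ∀ l : ℕ, l < ellOf c k →
      {w : Fin p → ℝ | (Eminus m l * C0mat Q lam mu * Eplus p k).mulVec w = 0} =
        {w : Fin p → ℝ | ∀ i : Fin p, (i : ℕ) < k → w i = 0} :=
  kernel_eq_first_k_zero_general Q L hL c hc lam hlam mu hmu k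
end

section
/- Let p, m ≥ 1, let Q ∈ ℝ^{p×m} with rank Q = p, let L ∈ ℝ^{m×m} be lower unitriangular with Q⁰ := QL in canonical form with witnessing indices c_1,…,c_p, and let Λ₊ = diag(λ_1,…,λ_p) ∈ ℝ^{p×p} with λ_i < 0 for all i, Λ₋ ∈ ℝ^{m×m} diagonal with strictly positive diagonal entries. Set C₀ = -Λ₋^{-1} Qᵀ Λ₊ Σ and, for k ∈ {1,…,p}, ℓ(k) := min(c_p, c_{p-1}, …, c_{p-k+1}). Then for every k ∈ {1,…,p}: (a) for every ℓ ∈ {1,…,ℓ(k)-1}, ker(E⁻_ℓ C₀ E⁺_k) = ker(C₀ E⁺_k); and (b) ker(E⁻_{ℓ(k)-1} C₀ E⁺_k) is a proper subset of ker(E⁻_{ℓ(k)} C₀ E⁺_k). -/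
/-!
Write `C₀ E⁺_k w = -Λ₋⁻¹ Qᵀ u` with `u = Λ₊ Σ E⁺_k w`; as `w` varies, `u` ranges over the vectors
supported on the last `k` rows. As `Λ₋` is an invertible diagonal and `L` is lower
unitriangular, `E⁻_ℓ C₀ E⁺_k w = 0` iff the coordinates `j > ℓ` of `uᵀ Q⁰` vanish. By the
canonical form, `uᵀ Q⁰` is supported on the pivot columns `c_r` of the last `k` rows, all of
which are `≥ ℓ(k)`; this gives (a). For (b), the pivot columns of `Q⁰` form an upper triangular
matrix with nonzero diagonal, so some such `u` makes `uᵀ Q⁰` the unit vector at column `ℓ(k)`.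
-/

open Matrix

theorem Matrix.IsLowerTriangular.vecMul_apply_eq_zero {R : Type*} [Semiring R] {m : ℕ}
    {M : Matrix (Fin m) (Fin m) R} (hM : M.IsLowerTriangular) {x : Fin m → R} {l : ℕ}
    (hx : ∀ i : Fin m, l ≤ (i : ℕ) → x i = 0) (j : Fin m) (hj : l ≤ (j : ℕ)) : (x ᵥ* M) j = 0 := by
  rw [vecMul, dotProduct]
  refine Finset.sum_eq_zero fun i _ => ?_
  rcases lt_or_ge i j with hij | hji
  · rw [hM (show OrderDual.toDual j < OrderDual.toDual i from hij), mul_zero]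
  · rw [hx i (hj.trans hji), zero_mul]

theorem IsLowerUnitriangular.isLowerTriangular {m : ℕ} {L : Matrix (Fin m) (Fin m) ℝ}
    (hL : IsLowerUnitriangular L) : L.IsLowerTriangular :=
  fun _ _ hij => hL.1 _ _ hij

theorem IsLowerUnitriangular.isUnit_det {m : ℕ} {L : Matrix (Fin m) (Fin m) ℝ}
    (hL : IsLowerUnitriangular L) : IsUnit L.det := by
  simp [det_of_isLowerTriangular L hL.isLowerTriangular, hL.2]

theorem IsLowerUnitriangular.vecMul_tail_eq_zero_iff {m : ℕ} {L : Matrix (Fin m) (Fin m) ℝ}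
    (hL : IsLowerUnitriangular L) (x : Fin m → ℝ) (l : ℕ) :
    (∀ j : Fin m, l ≤ (j : ℕ) → (x ᵥ* L) j = 0) ↔ ∀ j : Fin m, l ≤ (j : ℕ) → x j = 0 := by
  refine ⟨fun h => ?_, hL.isLowerTriangular.vecMul_apply_eq_zero⟩
  have := invertibleOfIsUnitDet L hL.isUnit_det
  have hinv : L⁻¹.IsLowerTriangular := blockTriangular_inv_of_blockTriangular hL.isLowerTriangular
  simpa [vecMul_vecMul] using hinv.vecMul_apply_eq_zero h

namespace IsCanonicalFormWith

variable {p m : ℕ} {Q : Matrix (Fin p) (Fin m) ℝ} {c : Fin p → Fin m}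

theorem apply_eq_zero_of_forall_ne (hc : IsCanonicalFormWith Q c) {i : Fin p} {j : Fin m}
    (hj : ∀ r : Fin p, i ≤ r → j ≠ c r) : Q i j = 0 := by
  obtain ⟨-, hafter, hbefore⟩ := hc.2 i
  rcases lt_trichotomy j (c i) with hlt | heq | hgt
  · exact hbefore j hlt
  · exact absurd heq (hj i le_rfl)
  · exact hafter j hgt fun r hr => hj r hr.le

theorem isUpperTriangular (hc : IsCanonicalFormWith Q c) :
    (Matrix.of fun a b => Q a (c b)).IsUpperTriangular := fun _ _ hba =>
  hc.apply_eq_zero_of_forall_ne fun _ hr h => (hba.trans_le hr).ne (hc.1 h)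

theorem vecMul_apply_eq_zero (hc : IsCanonicalFormWith Q c) {s : ℕ} {u : Fin p → ℝ}
    (hu : ∀ r : Fin p, (r : ℕ) < s → u r = 0) {j : Fin m}
    (hj : ∀ r : Fin p, s ≤ (r : ℕ) → j ≠ c r) : (u ᵥ* Q) j = 0 := by
  rw [Matrix.vecMul, dotProduct]
  refine Finset.sum_eq_zero fun r _ => ?_
  rcases lt_or_ge (r : ℕ) s with hr | hr
  · rw [hu r hr, zero_mul]
  · rw [hc.apply_eq_zero_of_forall_ne fun r' hr' => hj r' (hr.trans hr'), mul_zero]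

theorem exists_vecMul_eq_single (hc : IsCanonicalFormWith Q c) (r₀ : Fin p) :
    ∃ u : Fin p → ℝ, (∀ r, r < r₀ → u r = 0) ∧ u ᵥ* Q = Pi.single (c r₀) 1 := by
  set B : Matrix (Fin p) (Fin p) ℝ := Matrix.of fun a b => Q a (c b)
  have hB : B.IsUpperTriangular := hc.isUpperTriangular
  have hdet : IsUnit B.det := by
    rw [Matrix.det_of_isUpperTriangular hB, isUnit_iff_ne_zero]
    exact Finset.prod_ne_zero_iff.mpr fun r _ => (hc.2 r).1
  have := B.invertibleOfIsUnitDet hdet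
  have hBinv : B⁻¹.IsUpperTriangular := Matrix.blockTriangular_inv_of_blockTriangular hB
  refine ⟨B⁻¹ r₀, fun r hr => hBinv hr, funext fun j => ?_⟩
  by_cases hj : ∃ r, j = c r
  · obtain ⟨r, rfl⟩ := hj
    have hrow : (B⁻¹ r₀ ᵥ* Q) (c r) = (1 : Matrix (Fin p) (Fin p) ℝ) r₀ r := by
      rw [← B.inv_mul_of_invertible]; rfl
    simp only [Pi.single_apply, hc.1.eq_iff]
    simpa [Matrix.one_apply, eq_comm] using hrow
  · push Not at hj
    rw [Pi.single_apply, if_neg (hj r₀)]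
    exact hc.vecMul_apply_eq_zero (s := 0) (by simp) fun r _ => hj r

end IsCanonicalFormWith

theorem SigmaMat_mulVec_s8 {p : ℕ} (w : Fin p → ℝ) : SigmaMat p *ᵥ w = fun i => w i.rev := by
  funext i
  rw [mulVec, dotProduct, Finset.sum_eq_single i.rev]
  · simp [SigmaMat, Fin.val_rev, show (i : ℕ) + (p - (i + 1)) + 1 = p by omega]
  · intro j _ hj
    have : ¬ (i : ℕ) + j + 1 = p := fun h => hj (Fin.ext (by rw [Fin.val_rev]; omega))
    simp [SigmaMat, this]
  · simp

theorem diagonal_mul_SigmaMat_mul_Eplus_mulVec_apply {p : ℕ} (lam w : Fin p → ℝ) (k : ℕ)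
    (r : Fin p) :
    ((diagonal lam * SigmaMat p * Eplus p k) *ᵥ w) r =
      lam r * if (r.rev : ℕ) < k then w r.rev else 0 := by
  simp [← mulVec_mulVec, SigmaMat_mulVec_s8, Eplus, mulVec_diagonal]

theorem diagonal_mul_SigmaMat_mul_Eplus_mulVec_apply_eq_zero {p : ℕ} (lam w : Fin p → ℝ)
    {k : ℕ} {r : Fin p} (hr : (r : ℕ) < p - k) :
    ((diagonal lam * SigmaMat p * Eplus p k) *ᵥ w) r = 0 := by
  have : ¬ (r.rev : ℕ) < k := by rw [Fin.val_rev]; omega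
  rw [diagonal_mul_SigmaMat_mul_Eplus_mulVec_apply, if_neg this, mul_zero]

theorem exists_diagonal_mul_SigmaMat_mul_Eplus_mulVec_eq {p : ℕ} {lam : Fin p → ℝ}
    (hlam : ∀ r, lam r ≠ 0) {k : ℕ} {u : Fin p → ℝ} (hu : ∀ r : Fin p, (r : ℕ) < p - k → u r = 0) :
    ∃ w, (diagonal lam * SigmaMat p * Eplus p k) *ᵥ w = u := by
  refine ⟨fun i => u i.rev / lam i.rev, funext fun r => ?_⟩
  rw [diagonal_mul_SigmaMat_mul_Eplus_mulVec_apply]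
  by_cases hr : (r.rev : ℕ) < k
  · rw [if_pos hr, Fin.rev_rev, mul_div_cancel₀ _ (hlam r)]
  · rw [Fin.val_rev] at hr
    rw [if_neg (by rw [Fin.val_rev]; exact hr), mul_zero, hu r (by omega)]

theorem Eminus_zero (m : ℕ) : Eminus m 0 = 1 := by
  simp [Eminus]

theorem Eminus_mul_C0mat_mul_Eplus_mulVec {p m : ℕ} (Q : Matrix (Fin p) (Fin m) ℝ)
    (lam : Fin p → ℝ) (mu : Fin m → ℝ) (l k : ℕ) (w : Fin p → ℝ) :
    (Eminus m l * C0mat Q lam mu * Eplus p k) *ᵥ w = fun j : Fin m =>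
      -((if (j : ℕ) < l then 0 else 1) *
        ((mu j)⁻¹ * (((diagonal lam * SigmaMat p * Eplus p k) *ᵥ w) ᵥ* Q) j)) := by
  funext j
  simp only [C0mat, Eminus, Matrix.mul_neg, Matrix.neg_mul, neg_mulVec, ← mulVec_mulVec,
    mulVec_transpose, Matrix.mul_assoc]
  simp [mulVec_diagonal]

theorem Eminus_mul_C0mat_mul_Eplus_mulVec_eq_zero_iff {p m : ℕ} (Q : Matrix (Fin p) (Fin m) ℝ)
    {L : Matrix (Fin m) (Fin m) ℝ} (hL : IsLowerUnitriangular L) (lam : Fin p → ℝ)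
    {mu : Fin m → ℝ} (hmu : ∀ j, mu j ≠ 0) (l k : ℕ) (w : Fin p → ℝ) :
    (Eminus m l * C0mat Q lam mu * Eplus p k) *ᵥ w = 0 ↔
      ∀ j : Fin m, l ≤ (j : ℕ) →
        (((diagonal lam * SigmaMat p * Eplus p k) *ᵥ w) ᵥ* (Q * L)) j = 0 := by
  rw [← vecMul_vecMul, hL.vecMul_tail_eq_zero_iff, Eminus_mul_C0mat_mul_Eplus_mulVec, funext_iff]
  refine forall_congr' fun j => ?_
  by_cases hj : (j : ℕ) < l
  · simp [hj]
  · simp [hj, hmu j, not_lt.mp hj]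

theorem ellOf_le {p m : ℕ} (c : Fin p → Fin m) {k : ℕ} {r : Fin p} (hr : p - k ≤ (r : ℕ)) :
    ellOf c k ≤ (c r : ℕ) + 1 :=
  Nat.sInf_le ⟨r, hr, rfl⟩

theorem exists_eq_ellOf {p m : ℕ} (c : Fin p → Fin m) {k : ℕ} (hk1 : 1 ≤ k) (hk2 : k ≤ p) :
    ∃ r : Fin p, p - k ≤ (r : ℕ) ∧ (c r : ℕ) + 1 = ellOf c k :=
  Nat.sInf_mem (s := {n | ∃ r : Fin p, p - k ≤ (r : ℕ) ∧ (c r : ℕ) + 1 = n})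
    ⟨_, ⟨p - 1, by omega⟩, by simp only; omega, rfl⟩

theorem IsCanonicalFormWith.vecMul_apply_eq_zero_of_lt_ellOf {p m : ℕ}
    {Q : Matrix (Fin p) (Fin m) ℝ} {c : Fin p → Fin m} (hc : IsCanonicalFormWith Q c) {k : ℕ}
    {u : Fin p → ℝ} (hu : ∀ r : Fin p, (r : ℕ) < p - k → u r = 0) {j : Fin m}
    (hj : (j : ℕ) + 1 < ellOf c k) : (u ᵥ* Q) j = 0 := by
  refine hc.vecMul_apply_eq_zero hu fun r hr h => ?_
  have := ellOf_le c hr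
  have := congrArg Fin.val h
  omega

theorem kernel_stabilizes_until_ellOf_general {p m : ℕ}
    (Q : Matrix (Fin p) (Fin m) ℝ)
    (L : Matrix (Fin m) (Fin m) ℝ) (hL : IsLowerUnitriangular L)
    (c : Fin p → Fin m) (hc : IsCanonicalFormWith (Q * L) c)
    (lam : Fin p → ℝ) (hlam : ∀ i, lam i < 0)
    (mu : Fin m → ℝ) (hmu : ∀ j, 0 < mu j)
    (k : ℕ) (hk1 : 1 ≤ k) (hk2 : k ≤ p) :
    (∀ l : ℕ, 1 ≤ l → l < ellOf c k →
      {w : Fin p → ℝ | (Eminus m l * C0mat Q lam mu * Eplus p k).mulVec w = 0} =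
        {w : Fin p → ℝ | (C0mat Q lam mu * Eplus p k).mulVec w = 0}) ∧
    {w : Fin p → ℝ | (Eminus m (ellOf c k - 1) * C0mat Q lam mu * Eplus p k).mulVec w = 0} ⊂
      {w : Fin p → ℝ | (Eminus m (ellOf c k) * C0mat Q lam mu * Eplus p k).mulVec w = 0} := by
  have hker := Eminus_mul_C0mat_mul_Eplus_mulVec_eq_zero_iff Q hL lam (fun j => (hmu j).ne')
  obtain ⟨r₀, hr₀, hell⟩ := exists_eq_ellOf c hk1 hk2
  have hsub : {w : Fin p → ℝ | (Eminus m (ellOf c k - 1) * C0mat Q lam mu * Eplus p k) *ᵥ w = 0} ⊆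
      {w | (Eminus m (ellOf c k) * C0mat Q lam mu * Eplus p k) *ᵥ w = 0} := fun w hw => by
    simp only [Set.mem_ofPred_eq, hker] at hw ⊢
    exact fun j hj => hw j (by omega)
  refine ⟨fun l _ hl => Set.ext fun w => ?_, (Set.ssubset_iff_of_subset hsub).2 ?_⟩
  · have hC : C0mat Q lam mu * Eplus p k = Eminus m 0 * C0mat Q lam mu * Eplus p k := by
      rw [Eminus_zero, Matrix.one_mul]
    rw [Set.mem_ofPred_eq, Set.mem_ofPred_eq, hC, hker, hker]
    refine ⟨fun h j _ => ?_, fun h j _ => h j (Nat.zero_le _)⟩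
    by_cases hj : l ≤ (j : ℕ)
    · exact h j hj
    · exact hc.vecMul_apply_eq_zero_of_lt_ellOf
        (fun r hr => diagonal_mul_SigmaMat_mul_Eplus_mulVec_apply_eq_zero lam w hr) (by omega)
  · obtain ⟨u, hu, huQ⟩ := hc.exists_vecMul_eq_single r₀
    obtain ⟨w, hw⟩ := exists_diagonal_mul_SigmaMat_mul_Eplus_mulVec_eq (k := k)
      (fun r => (hlam r).ne) fun r hr => hu r (by rw [Fin.lt_def]; omega)
    refine ⟨w, ?_, ?_⟩ <;> simp only [Set.mem_ofPred_eq, hker, hw, huQ, Pi.single_apply]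
    · exact fun j hj => if_neg (by omega)
    · exact fun h => one_ne_zero (if_pos rfl ▸ h (c r₀) (by omega))

/-- (a) For `ℓ ∈ {1,…,ℓ(k)-1}`, `ker (E⁻_ℓ C₀ E⁺_k) = ker (C₀ E⁺_k)`, and
(b) `ker (E⁻_{ℓ(k)-1} C₀ E⁺_k)` is a proper subset of `ker (E⁻_{ℓ(k)} C₀ E⁺_k)`. -/
theorem kernel_stabilizes_until_ellOf {p m : ℕ} (hp : 1 ≤ p) (hm : 1 ≤ m)
    (Q : Matrix (Fin p) (Fin m) ℝ) (hQ : Q.rank = p)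
    (L : Matrix (Fin m) (Fin m) ℝ) (hL : IsLowerUnitriangular L)
    (c : Fin p → Fin m) (hc : IsCanonicalFormWith (Q * L) c)
    (lam : Fin p → ℝ) (hlam : ∀ i, lam i < 0)
    (mu : Fin m → ℝ) (hmu : ∀ j, 0 < mu j)
    (k : ℕ) (hk1 : 1 ≤ k) (hk2 : k ≤ p) :
    (∀ l : ℕ, 1 ≤ l → l < ellOf c k →
      {w : Fin p → ℝ | (Eminus m l * C0mat Q lam mu * Eplus p k).mulVec w = 0} =
        {w : Fin p → ℝ | (C0mat Q lam mu * Eplus p k).mulVec w = 0}) ∧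
    {w : Fin p → ℝ | (Eminus m (ellOf c k - 1) * C0mat Q lam mu * Eplus p k).mulVec w = 0} ⊂
      {w : Fin p → ℝ | (Eminus m (ellOf c k) * C0mat Q lam mu * Eplus p k).mulVec w = 0} :=
  kernel_stabilizes_until_ellOf_general Q L hL c hc lam hlam mu hmu k hk1 hk2
end

section
/- Let p, m ≥ 1 be integers, let t_1 ≤ t_2 ≤ … ≤ t_p be real numbers, let s_1 ≥ s_2 ≥ … ≥ s_m be real numbers, and let c : {1,…,p} → {1,…,m} be injective. For k ∈ {1,…,p} define ℓ(k) := min(c_p, c_{p-1}, …, c_{p-k+1}). Then max_{k ∈ {1,…,p}} ( t_{p-k+1} + s_{ℓ(k)} ) = max_{i ∈ {1,…,p}} ( t_i + s_{c_i} ). -/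
/-!
Each term `t_{p-k+1} + s_{ℓ(k)}` is dominated by `t_r + s_{c_r}`, where `r ≥ p-k+1` is a row
attaining the minimum `ℓ(k) = c_r` and `t` is monotone. Conversely `t_i + s_{c_i}` is dominated by
the term with `p-k+1 = i`, because `ℓ(k) ≤ c_i` and `s` is antitone.
-/

/-- For a (0-indexed) `k : Fin p`, the index (0-indexed) in `Fin m` given by
`ℓ(k+1) - 1 = min (c_p, …, c_{p-k}) - 1`, i.e. the minimum of `c r` over the
(0-indexed) rows `r` with `Fin.rev k ≤ r`. -/
noncomputable def ellIdx {p m : ℕ} (c : Fin p → Fin m) (k : Fin p) : Fin m :=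
  (Finset.univ.filter fun r : Fin p => Fin.rev k ≤ r).inf' ⟨Fin.rev k, by simp⟩ c

namespace Finset

variable {ι κ α : Type*} [SemilatticeSup α]

theorem sup'_eq_sup'_of_forall_exists_le {s : Finset ι} {t : Finset κ} (hs : s.Nonempty)
    (ht : t.Nonempty) {f : ι → α} {g : κ → α} (hfg : ∀ i ∈ s, ∃ j ∈ t, f i ≤ g j)
    (hgf : ∀ j ∈ t, ∃ i ∈ s, g j ≤ f i) : s.sup' hs f = t.sup' ht g :=
  le_antisymm
    (sup'_le _ _ fun i hi => let ⟨_, hj, h⟩ := hfg i hi; le_sup'_of_le _ hj h)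
    (sup'_le _ _ fun j hj => let ⟨_, hi, h⟩ := hgf j hj; le_sup'_of_le _ hi h)

end Finset

theorem exists_rev_le_and_ellIdx_eq {p m : ℕ} (c : Fin p → Fin m) (k : Fin p) :
    ∃ r, Fin.rev k ≤ r ∧ ellIdx c k = c r := by
  obtain ⟨r, hr, hmin⟩ := Finset.exists_mem_eq_inf' _ c
  exact ⟨r, (Finset.mem_filter.mp hr).2, hmin⟩

theorem ellIdx_rev_le {p m : ℕ} (c : Fin p → Fin m) (i : Fin p) : ellIdx c (Fin.rev i) ≤ c i :=
  Finset.inf'_le _ (by simp)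

theorem weck_time_eq_canonical_time_general {p m : ℕ} (hp : 1 ≤ p)
    (t : Fin p → ℝ) (ht : Monotone t)
    (s : Fin m → ℝ) (hs : Antitone s)
    (c : Fin p → Fin m) :
    (Finset.univ.sup' ⟨⟨0, hp⟩, Finset.mem_univ _⟩
        fun k : Fin p => t (Fin.rev k) + s (ellIdx c k)) =
      (Finset.univ.sup' ⟨⟨0, hp⟩, Finset.mem_univ _⟩
        fun i : Fin p => t i + s (c i)) := by
  refine Finset.sup'_eq_sup'_of_forall_exists_le _ _ (fun k _ => ?_) (fun i _ => ?_)
  · obtain ⟨r, hkr, hr⟩ := exists_rev_le_and_ellIdx_eq c k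
    refine ⟨r, Finset.mem_univ r, ?_⟩
    rw [hr]
    gcongr
    exact ht hkr
  · refine ⟨Fin.rev i, Finset.mem_univ _, ?_⟩
    rw [Fin.rev_rev]
    gcongr
    exact hs (ellIdx_rev_le c i)

/-- Let `t_1 ≤ … ≤ t_p`, `s_1 ≥ … ≥ s_m` and `c : {1,…,p} → {1,…,m}` injective, and
`ℓ(k) = min (c_p, …, c_{p-k+1})`. Then
`max_k (t_{p-k+1} + s_{ℓ(k)}) = max_i (t_i + s_{c_i})`
(in 0-indexed form, `Fin.rev k` encodes `p-k+1` and `ellIdx c k` encodes `ℓ(k)`). -/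
theorem weck_time_eq_canonical_time {p m : ℕ} (hp : 1 ≤ p) (hm : 1 ≤ m)
    (t : Fin p → ℝ) (ht : Monotone t)
    (s : Fin m → ℝ) (hs : Antitone s)
    (c : Fin p → Fin m) (hc : Function.Injective c) :
    (Finset.univ.sup' ⟨⟨0, hp⟩, Finset.mem_univ _⟩
        fun k : Fin p => t (Fin.rev k) + s (ellIdx c k)) =
      (Finset.univ.sup' ⟨⟨0, hp⟩, Finset.mem_univ _⟩
        fun i : Fin p => t i + s (c i)) :=
  weck_time_eq_canonical_time_general hp t ht s hs c
end

section
/- Let p, m be integers with m ≥ p ≥ 1, let t_1 ≤ t_2 ≤ … ≤ t_p be real numbers and let s_1 ≥ s_2 ≥ … ≥ s_m be real numbers. Then for every injective map c : {1,…,p} → {1,…,m}: max( s_1, max_{i ∈ {1,…,p}} ( t_i + s_{c_i} ) ) ≥ max( s_1, max_{i ∈ {1,…,p}} ( t_i + s_{m-p+i} ) ). Consequently, the minimum over all injective c : {1,…,p} → {1,…,m} of max( s_1, max_i ( t_i + s_{c_i} ) ) equals max( s_1, max_i ( t_i + s_{m-p+i} ) ), and it is attained at c_i = m - p + i. -/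
/-!
An injective `c` sends the `p - i` indices `j ≥ i` to distinct values, so not all of them can
exceed `m - p + i`; for such a `j`, monotonicity of `t` and antitonicity of `s` give
`t i + s_{m-p+i} ≤ t j + s_{c j}`. Hence the choice `c i = m - p + i` minimizes every term
of the maximum simultaneously.
-/

namespace OptimalIndices

variable {p m : ℕ}

def lastIndices (hpm : p ≤ m) (i : Fin p) : Fin m :=
  ⟨m - p + i, by omega⟩

lemma lastIndices_injective (hpm : p ≤ m) : Function.Injective (lastIndices hpm) := by
  intro a b hab
  have := congrArg Fin.val hab
  simp only [lastIndices] at this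
  exact Fin.ext (by omega)

lemma exists_le_and_le_lastIndices (hpm : p ≤ m) {c : Fin p → Fin m}
    (hc : Function.Injective c) (i : Fin p) :
    ∃ j, i ≤ j ∧ c j ≤ lastIndices hpm i := by
  by_contra! h
  have hsub : (Finset.Ici i).image c ⊆ Finset.Ioi (lastIndices hpm i) := by
    rintro _ hk
    obtain ⟨j, hij, rfl⟩ := Finset.mem_image.mp hk
    exact Finset.mem_Ioi.mpr (h j (Finset.mem_Ici.mp hij))
  have hcard := Finset.card_le_card hsub
  rw [Finset.card_image_of_injective _ hc, Fin.card_Ici, Fin.card_Ioi] at hcard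
  simp only [lastIndices] at hcard
  omega

lemma sup'_add_lastIndices_le {α : Type*} [LinearOrder α] [Add α] [AddLeftMono α]
    [AddRightMono α] (hpm : p ≤ m) {t : Fin p → α} (ht : Monotone t) {s : Fin m → α}
    (hs : Antitone s) {c : Fin p → Fin m} (hc : Function.Injective c)
    (hne : (Finset.univ : Finset (Fin p)).Nonempty) :
    Finset.univ.sup' hne (fun i => t i + s (lastIndices hpm i)) ≤
      Finset.univ.sup' hne (fun i => t i + s (c i)) := by
  refine Finset.sup'_le _ _ fun i _ => ?_
  obtain ⟨j, hij, hcj⟩ := exists_le_and_le_lastIndices hpm hc i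
  calc t i + s (lastIndices hpm i) ≤ t j + s (c j) := add_le_add (ht hij) (hs hcj)
    _ ≤ _ := Finset.le_sup' (fun i => t i + s (c i)) (Finset.mem_univ j)

end OptimalIndices

open OptimalIndices in
/-- Among all injective families of indices `c : {1,…,p} → {1,…,m}` (with
`t_1 ≤ … ≤ t_p` and `s_1 ≥ … ≥ s_m`), the quantity
`max (s_1, max_i (t_i + s_{c_i}))` is bounded below by its value for the choice
`c_i = m - p + i`; consequently the minimum over all injective `c` is attained
at this choice. -/
theorem optimal_indices {p m : ℕ} (hp : 1 ≤ p) (hpm : p ≤ m)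
    (t : Fin p → ℝ) (ht : Monotone t)
    (s : Fin m → ℝ) (hs : Antitone s) :
    (∀ c : Fin p → Fin m, Function.Injective c →
        max (s ⟨0, lt_of_lt_of_le hp hpm⟩)
            (Finset.univ.sup' ⟨⟨0, hp⟩, Finset.mem_univ _⟩
              fun i : Fin p => t i + s (c i)) ≥
          max (s ⟨0, lt_of_lt_of_le hp hpm⟩)
            (Finset.univ.sup' ⟨⟨0, hp⟩, Finset.mem_univ _⟩
              fun i : Fin p => t i + s ⟨m - p + (i : ℕ), by have := i.isLt; omega⟩)) ∧
      IsLeast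
        {T : ℝ | ∃ c : Fin p → Fin m, Function.Injective c ∧
            T = max (s ⟨0, lt_of_lt_of_le hp hpm⟩)
              (Finset.univ.sup' ⟨⟨0, hp⟩, Finset.mem_univ _⟩
                fun i : Fin p => t i + s (c i))}
        (max (s ⟨0, lt_of_lt_of_le hp hpm⟩)
          (Finset.univ.sup' ⟨⟨0, hp⟩, Finset.mem_univ _⟩
            fun i : Fin p => t i + s ⟨m - p + (i : ℕ), by have := i.isLt; omega⟩)) := by
  have key (c : Fin p → Fin m) (hc : Function.Injective c) :=
    max_le_max (le_refl (s ⟨0, lt_of_lt_of_le hp hpm⟩))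
      (sup'_add_lastIndices_le hpm ht hs hc ⟨⟨0, hp⟩, Finset.mem_univ _⟩)
  refine ⟨key, ⟨lastIndices hpm, lastIndices_injective hpm, rfl⟩, ?_⟩
  rintro T ⟨c, hc, rfl⟩
  exact key c hc
end

section
/- Let p, m be integers with m ≥ p ≥ 1 and let Q ∈ ℝ^{p×m} with rank Q = p, with canonical indices c_1(Q),…,c_p(Q). Then c_i(Q) = m - p + i for every i ∈ {1,…,p} (equivalently, the canonical form of Q is upper triangular) if and only if for every i ∈ {1,…,p} the i×i matrix formed from the last i rows and the last i columns of Q is invertible. -/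
/-!
Multiplying on the right by a lower unitriangular `L` does not change the minors that use the
last `i` columns, since column `j` of `Q * L` only involves columns `≥ j` of `Q`. So the minors
in the statement are those of the canonical form `M = Q * L`. If the pivots of `M` are
`c_i = m - p + i`, its last `i × i` block is upper triangular with the pivots on the diagonal.
Conversely, let `i` be the last row whose pivot is misplaced. Injectivity of `c` rules out
`c_i > m - p + i`, and if `c_i < m - p + i`, then column `m - p + i` vanishes on rows `≥ i`,
so the last `(p - i) × (p - i)` block of `M` is singular.
-/

def lastIndices {n i : ℕ} (h : i ≤ n) (a : Fin i) : Fin n :=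
  ⟨n - i + a, by omega⟩

@[simp]
theorem val_lastIndices {n i : ℕ} (h : i ≤ n) (a : Fin i) :
    (lastIndices h a : ℕ) = n - i + a :=
  rfl

theorem lastIndices_strictMono {n i : ℕ} (h : i ≤ n) : StrictMono (lastIndices h) :=
  fun a b hab => Fin.lt_def.mpr (by simp only [val_lastIndices]; omega)

theorem submatrix_mul_lastIndices {ι : Type*} {m i : ℕ} (h : i ≤ m)
    (Q : Matrix ι (Fin m) ℝ) (L : Matrix (Fin m) (Fin m) ℝ) (hL : IsLowerUnitriangular L)
    (f : Fin i → ι) :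
    (Q * L).submatrix f (lastIndices h) =
      Q.submatrix f (lastIndices h) * L.submatrix (lastIndices h) (lastIndices h) := by
  ext a b
  refine (Fintype.sum_of_injective _ (lastIndices_strictMono h).injective _ _
    (fun k hkr => ?_) fun _ => rfl).symm
  have hk : (k : ℕ) < m - i := by
    by_contra! hge
    exact hkr ⟨⟨k - (m - i), by omega⟩, Fin.ext (by simp only [val_lastIndices]; omega)⟩
  dsimp only
  rw [hL.1 k _ (Fin.lt_def.mpr (by simp only [val_lastIndices]; omega)), mul_zero]

theorem det_submatrix_mul_lastIndices {ι : Type*} {m i : ℕ} (h : i ≤ m)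
    (Q : Matrix ι (Fin m) ℝ) (L : Matrix (Fin m) (Fin m) ℝ) (hL : IsLowerUnitriangular L)
    (f : Fin i → ι) :
    ((Q * L).submatrix f (lastIndices h)).det = (Q.submatrix f (lastIndices h)).det := by
  have hlower : (L.submatrix (lastIndices h) (lastIndices h)).IsLowerTriangular :=
    fun a b (hab : a < b) => hL.1 _ _ (lastIndices_strictMono h hab)
  have hL' : (L.submatrix (lastIndices h) (lastIndices h)).det = 1 := by
    rw [Matrix.det_of_isLowerTriangular _ hlower]
    simp [hL.2]
  rw [submatrix_mul_lastIndices h Q L hL, Matrix.det_mul, hL', mul_one]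

namespace IsCanonicalFormWith

variable {p m : ℕ} {M : Matrix (Fin p) (Fin m) ℝ} {c : Fin p → Fin m}

theorem det_submatrix_ne_zero (hM : IsCanonicalFormWith M c) {i : ℕ} {f : Fin i → Fin p}
    {g : Fin i → Fin m} (hg : StrictMono g) (hcf : c ∘ f = g) :
    (M.submatrix f g).det ≠ 0 := by
  have hupper : (M.submatrix f g).IsUpperTriangular := fun a b hba =>
    (hM.2 (f a)).2.2 (g b) (by rw [show c (f a) = g a from congrFun hcf a]; exact hg hba)
  rw [Matrix.det_of_isUpperTriangular hupper, Finset.prod_ne_zero_iff]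
  intro a _
  rw [Matrix.submatrix_apply, ← hcf]
  exact (hM.2 (f a)).1

theorem pivot_le_of_forall_lt (hM : IsCanonicalFormWith M c) {i : Fin p}
    (hlater : ∀ k : Fin p, i < k → (c k : ℕ) = m - p + k) :
    (c i : ℕ) ≤ m - p + i := by
  by_contra! h
  have hk : (c i : ℕ) - (m - p) < p := by omega
  have hck : c ⟨c i - (m - p), hk⟩ = c i :=
    Fin.ext (by rw [hlater _ (Fin.lt_def.mpr (by simp only; omega)), Fin.val_mk]; omega)
  have hik : (c i : ℕ) - (m - p) = i := congrArg Fin.val (hM.1 hck)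
  omega

theorem det_submatrix_lastIndices_eq_zero (hM : IsCanonicalFormWith M c) (hpm : p ≤ m)
    {i : Fin p} (hlater : ∀ k : Fin p, i < k → (c k : ℕ) = m - p + k)
    (hi : (c i : ℕ) < m - p + i) :
    (M.submatrix (lastIndices (Nat.sub_le p i))
      (lastIndices ((Nat.sub_le p i).trans hpm))).det = 0 := by
  refine Matrix.det_eq_zero_of_column_eq_zero ⟨0, by omega⟩ fun a => ?_
  simp only [Matrix.submatrix_apply]
  rcases Nat.eq_zero_or_pos (a : ℕ) with ha | ha
  · have hrow : lastIndices (Nat.sub_le p i) a = i :=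
      Fin.ext (by simp only [val_lastIndices]; omega)
    rw [hrow]
    refine (hM.2 i).2.1 _ (Fin.lt_def.mpr (by simp only [val_lastIndices]; omega))
      fun k hk hck => ?_
    have hk' := hlater k hk
    have hck' := congrArg Fin.val hck
    simp only [val_lastIndices] at hck'
    omega
  · have hrow := hlater (lastIndices (Nat.sub_le p i) a)
      (Fin.lt_def.mpr (by simp only [val_lastIndices]; omega))
    refine (hM.2 _).2.2 _ (Fin.lt_def.mpr ?_)
    simp only [val_lastIndices] at hrow ⊢
    omega

theorem pivots_eq_iff_det_submatrix_lastIndices_ne_zero (hM : IsCanonicalFormWith M c)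
    (hpm : p ≤ m) :
    (∀ i : Fin p, (c i : ℕ) = m - p + i) ↔
      ∀ n, 1 ≤ n → ∀ hn : n ≤ p,
        (M.submatrix (lastIndices hn) (lastIndices (hn.trans hpm))).det ≠ 0 := by
  constructor
  · intro hc n _ hn
    refine hM.det_submatrix_ne_zero (lastIndices_strictMono _) (funext fun a => Fin.ext ?_)
    simp only [Function.comp_apply, hc, val_lastIndices]
    omega
  · intro hdet
    by_contra! hbad
    obtain ⟨j, hj⟩ := hbad
    obtain ⟨i, hi, hmax⟩ := Finset.exists_max_image
      (Finset.univ.filter fun i : Fin p => (c i : ℕ) ≠ m - p + i) id ⟨j, by simpa using hj⟩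
    have hlater : ∀ k : Fin p, i < k → (c k : ℕ) = m - p + k := fun k hik => by
      by_contra hk
      exact absurd (hmax k (by simpa using hk)) (not_le.mpr hik)
    have hlt : (c i : ℕ) < m - p + i :=
      lt_of_le_of_ne (hM.pivot_le_of_forall_lt hlater) (by simpa using hi)
    exact hdet _ (by omega) _ (hM.det_submatrix_lastIndices_eq_zero hpm hlater hlt)

end IsCanonicalFormWith

/-- The canonical indices of `Q` satisfy `c_i(Q) = m - p + i` for every `i`
(i.e. the canonical form of `Q` is upper triangular) if and only if, for every
`i ∈ {1,…,p}`, the `i × i` matrix formed from the last `i` rows and the last `i`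
columns of `Q` is invertible. -/
theorem canonical_upper_triangular_iff_minors_invertible {p m : ℕ}
    (hpm : p ≤ m)
    (Q : Matrix (Fin p) (Fin m) ℝ)
    (L : Matrix (Fin m) (Fin m) ℝ) (hL : IsLowerUnitriangular L)
    (c : Fin p → Fin m) (hc : IsCanonicalFormWith (Q * L) c) :
    (∀ i : Fin p, (c i : ℕ) = m - p + (i : ℕ)) ↔
      (∀ i : ℕ, 1 ≤ i → ∀ hip : i ≤ p,
        IsUnit (Matrix.det (Q.submatrix
          (fun a : Fin i => (⟨p - i + (a : ℕ), by have := a.isLt; omega⟩ : Fin p))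
          (fun a : Fin i => (⟨m - i + (a : ℕ), by have := a.isLt; omega⟩ : Fin m))))) := by
  rw [hc.pivots_eq_iff_det_submatrix_lastIndices_ne_zero hpm]
  refine forall_congr' fun n => forall_congr' fun _ => forall_congr' fun hn => ?_
  rw [isUnit_iff_ne_zero,
    det_submatrix_mul_lastIndices (hn.trans hpm) Q L hL (lastIndices hn)]
  rfl
end

section
/- Let Q⁰ ∈ ℝ^{p×m} be a matrix in canonical form with witnessing indices c_1,…,c_p, let d_1,…,d_p be nonzero real numbers, and let i₀ ∈ {1,…,p}. Then there exists α ∈ ℝ^p with α_i = 0 for every i < i₀ and α_{i₀} = 1 such that the vector β ∈ ℝ^m defined by β_j = ∑_{k=1}^{p} Q⁰_{k,j} d_k α_k satisfies: β_j = 0 for every j ∈ {1,…,m} with j > c_{i₀}; β_j = 0 for every j ∉ {c_1,…,c_p}; and β_{c_{i₀}} = Q⁰_{i₀,c_{i₀}} d_{i₀} ≠ 0. -/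
noncomputable def alphaFun {p m : ℕ} (Q0 : Matrix (Fin p) (Fin m) ℝ)
    (c : Fin p → Fin m) (d : Fin p → ℝ) (i0 : Fin p) : ℕ → ℝ
  | n =>
    if h : n < p then
      if n < (i0 : ℕ) then 0
      else if n = (i0 : ℕ) then 1
      else
        -(∑ j : Fin p, if hj : (j : ℕ) < n then
            Q0 j (c ⟨n, h⟩) * d j * alphaFun Q0 c d i0 j else 0)
          / (Q0 ⟨n, h⟩ (c ⟨n, h⟩) * d ⟨n, h⟩)
    else 0
termination_by n => n
decreasing_by exact hj

/-- Triangularity : `Q0 k (c l) = 0` for `l < k`. -/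
lemma canon_tri {p m : ℕ} {Q0 : Matrix (Fin p) (Fin m) ℝ} {c : Fin p → Fin m}
    (hc : IsCanonicalFormWith Q0 c) {k l : Fin p} (hlk : l < k) : Q0 k (c l) = 0 := by
  obtain ⟨hinj, hrow⟩ := hc
  rcases lt_trichotomy (c l) (c k) with h | h | h
  · exact (hrow k).2.2 _ h
  · exact absurd (hinj h) (by omega)
  · refine (hrow k).2.1 _ h ?_
    intro r hr hcontra
    exact absurd (hinj hcontra) (by omega)

/-- Vanishing outside the range of `c`. -/
lemma canon_out {p m : ℕ} {Q0 : Matrix (Fin p) (Fin m) ℝ} {c : Fin p → Fin m}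
    (hc : IsCanonicalFormWith Q0 c) {j : Fin m} (hj : ∀ k : Fin p, j ≠ c k)
    (k : Fin p) : Q0 k j = 0 := by
  obtain ⟨hinj, hrow⟩ := hc
  rcases lt_trichotomy j (c k) with h | h | h
  · exact (hrow k).2.2 _ h
  · exact absurd h (hj k)
  · exact (hrow k).2.1 _ h (fun r _ => hj r)

/-- The key algebraic construction in the proof of non-controllability below the
minimal time: given a matrix `Q⁰` in canonical form with witnessing indices `c`,
nonzero weights `d_k`, and a row `i₀`, there exists `α ∈ ℝ^p` with `α_i = 0` for
`i < i₀` and `α_{i₀} = 1` such that `β_j = ∑_k Q⁰_{k,j} d_k α_k` vanishes for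
`j > c_{i₀}` and for `j ∉ {c_1,…,c_p}`, while `β_{c_{i₀}} = Q⁰_{i₀,c_{i₀}} d_{i₀} ≠ 0`. -/
theorem exists_alpha_nontrivial_kernel_data {p m : ℕ}
    (Q0 : Matrix (Fin p) (Fin m) ℝ) (c : Fin p → Fin m)
    (hc : IsCanonicalFormWith Q0 c)
    (d : Fin p → ℝ) (hd : ∀ k, d k ≠ 0) (i0 : Fin p) :
    ∃ α : Fin p → ℝ,
      (∀ i : Fin p, i < i0 → α i = 0) ∧
      α i0 = 1 ∧
      (∀ j : Fin m, c i0 < j → (∑ k : Fin p, Q0 k j * d k * α k) = 0) ∧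
      (∀ j : Fin m, (∀ k : Fin p, j ≠ c k) → (∑ k : Fin p, Q0 k j * d k * α k) = 0) ∧
      (∑ k : Fin p, Q0 k (c i0) * d k * α k) = Q0 i0 (c i0) * d i0 ∧
      Q0 i0 (c i0) * d i0 ≠ 0 := by
  set α : Fin p → ℝ := fun i => alphaFun Q0 c d i0 i.val with hα
  have halt : ∀ i : Fin p, i < i0 → α i = 0 := by
    intro i hi
    show alphaFun Q0 c d i0 i.val = 0
    rw [alphaFun.eq_def]
    simp [i.isLt, Fin.lt_iff_val_lt_val.mp hi]
  have hone : α i0 = 1 := by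
    show alphaFun Q0 c d i0 i0.val = 1
    rw [alphaFun.eq_def]
    simp [i0.isLt]
  -- the key recursion identity : for l > i0, the full column sum at c l is 0
  have hkey : ∀ l : Fin p, i0 < l →
      (∑ k : Fin p, Q0 k (c l) * d k * α k) = 0 := by
    intro l hl
    have hαl : α l = -(∑ j : Fin p, if (j : ℕ) < (l : ℕ) then
            Q0 j (c l) * d j * α j else 0)
          / (Q0 l (c l) * d l) := by
      show alphaFun Q0 c d i0 l.val = _
      rw [alphaFun.eq_def]
      have h1 : ¬ ((l : ℕ) < (i0 : ℕ)) := by omega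
      have h2 : ¬ ((l : ℕ) = (i0 : ℕ)) := by omega
      simp only [l.isLt, dif_pos, h1, if_false, h2, Fin.eta]
      have hs : (∑ x : Fin p, if h : (x : ℕ) < (l : ℕ) then
            Q0 x (c l) * d x * alphaFun Q0 c d i0 x.val else 0)
          = ∑ j : Fin p, if (j : ℕ) < (l : ℕ) then Q0 j (c l) * d j * α j else 0 :=
        Finset.sum_congr rfl fun j _ => by split <;> rfl
      rw [hs]
    -- split the sum
    have hsplit : ∀ k : Fin p, Q0 k (c l) * d k * α k =
        (if (k : ℕ) < (l : ℕ) then Q0 k (c l) * d k * α k else 0)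
        + (if k = l then Q0 k (c l) * d k * α k else 0) := by
      intro k
      rcases lt_trichotomy k l with h | h | h
      · have : k ≠ l := ne_of_lt h
        simp [Fin.lt_iff_val_lt_val.mp h, this]
      · subst h; simp
      · have h1 : ¬ ((k : ℕ) < (l : ℕ)) := by exact_mod_cast not_lt.mpr (le_of_lt h)
        have h2 : k ≠ l := ne_of_gt h
        simp [h1, h2, canon_tri hc h]
    calc (∑ k : Fin p, Q0 k (c l) * d k * α k)
        = (∑ k : Fin p, if (k : ℕ) < (l : ℕ) then Q0 k (c l) * d k * α k else 0)
          + (∑ k : Fin p, if k = l then Q0 k (c l) * d k * α k else 0) := by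
          rw [← Finset.sum_add_distrib]; exact Finset.sum_congr rfl fun k _ => hsplit k
      _ = (∑ k : Fin p, if (k : ℕ) < (l : ℕ) then Q0 k (c l) * d k * α k else 0)
          + Q0 l (c l) * d l * α l := by
          rw [Finset.sum_ite_eq' Finset.univ l (fun k => Q0 k (c l) * d k * α k)]
          simp
      _ = 0 := by
          rw [hαl]
          have hne : Q0 l (c l) * d l ≠ 0 := mul_ne_zero (hc.2 l).1 (hd l)
          field_simp
          rw [div_self hne]
          ring
  refine ⟨α, halt, hone, ?_, ?_, ?_, mul_ne_zero (hc.2 i0).1 (hd i0)⟩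
  · -- j > c i0
    intro j hj
    by_cases hrange : ∀ k : Fin p, j ≠ c k
    · exact Finset.sum_eq_zero fun k _ => by rw [canon_out hc hrange k]; ring
    · push_neg at hrange
      obtain ⟨l, hl⟩ := hrange
      subst hl
      rcases lt_trichotomy l i0 with h | h | h
      · -- all terms vanish
        apply Finset.sum_eq_zero
        intro k _
        rcases lt_or_ge k i0 with hk | hk
        · rw [halt k hk]; ring
        · have : l < k := lt_of_lt_of_le h hk
          rw [canon_tri hc this]; ring
      · subst h; exact absurd hj (lt_irrefl _)
      · exact hkey l h
  · -- j outside range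
    intro j hj
    exact Finset.sum_eq_zero fun k _ => by rw [canon_out hc hj k]; ring
  · -- value at c i0
    have : ∀ k : Fin p, Q0 k (c i0) * d k * α k =
        if k = i0 then Q0 i0 (c i0) * d i0 else 0 := by
      intro k
      rcases lt_trichotomy k i0 with h | h | h
      · simp [ne_of_lt h, halt k h]
      · subst h; simp [hone]
      · simp [ne_of_gt h, canon_tri hc h]
    rw [Finset.sum_congr rfl fun k _ => this k]
    simp
end
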